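/- arXiv:2012.08749 — 2 statements merged into one kernel-verified Lean document; each statement's English description precedes it below -/
import Mathlib

section
/- Let μ be a probability measure on ℝ_{>0}×ℝ with coordinates (Λ,B), with Λ supported in [Σ_min,Σ_max] ⊂ (0,∞) and E[B²Λ] < ∞, let σ > 0 and κ > 1. Consider the concave-convex function D(u,τ) = (1/2)( uτ + uσ²/τ − u²κ E_μ[1/(Λ^{-1} + u/τ)] − E_μ[B²Λ^{-1}/(Λ^{-1} + u/τ)] ) on u ≥ 0, τ > 0. Then the max-min problem max_{u≥0} min_{τ>0} D(u,τ) has a unique saddle point (u*, τ*) which satisfies: u*/τ* = ξ, where ξ > 0 is the unique positive solution of E_μ[1/((ξΛ)^{-1}+1)] = 1/κ, and τ*² = (σ² + E_μ[B²Λ^{-1}/(Λ^{-1}+ξ)²]) / (1 − κ E_μ[1/((ξΛ)^{-1}+1)²]) = γ. -/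
open MeasureTheory ProbabilityTheory Filter Finset Matrix

noncomputable section

/-- Euclidean norm of a pair of reals. -/
def en2 (v : ℝ × ℝ) : ℝ := Real.sqrt (v.1 ^ 2 + v.2 ^ 2)

/-- Euclidean norm of a triple of reals. -/
def en3 (v : ℝ × ℝ × ℝ) : ℝ := Real.sqrt (v.1 ^ 2 + v.2.1 ^ 2 + v.2.2 ^ 2)

/-- `f : ℝ² → ℝ` is pseudo-Lipschitz of order `k`. -/
def PL2 (k : ℕ) (f : ℝ × ℝ → ℝ) : Prop :=
  ∃ L > 0, ∀ x y : ℝ × ℝ,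
    |f x - f y| ≤ L * (1 + en2 x ^ (k - 1) + en2 y ^ (k - 1)) * en2 (x.1 - y.1, x.2 - y.2)

/-- `f : ℝ³ → ℝ` is pseudo-Lipschitz of order `k`. -/
def PL3 (k : ℕ) (f : ℝ × ℝ × ℝ → ℝ) : Prop :=
  ∃ L > 0, ∀ x y : ℝ × ℝ × ℝ,
    |f x - f y| ≤ L * (1 + en3 x ^ (k - 1) + en3 y ^ (k - 1)) *
      en3 (x.1 - y.1, x.2.1 - y.2.1, x.2.2 - y.2.2)

/-- `g : ℝ² → ℝ` is pseudo-Lipschitz of order 2 with constant at most `C`. -/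
def PL2ConstLE (C : ℝ) (g : ℝ × ℝ → ℝ) : Prop :=
  ∀ x y : ℝ × ℝ, |g x - g y| ≤ C * (1 + en2 x + en2 y) * en2 (x.1 - y.1, x.2 - y.2)

/-- The class `F` of test functions: `PL(3)` on `ℝ³`, with uniformly bounded `PL(2)`
constants of the slices `f(·,·,z)` for `z` in `[Smin, Smax]`. -/
def MemClassF (Smin Smax : ℝ) (f : ℝ × ℝ × ℝ → ℝ) : Prop :=
  PL3 3 f ∧ ∃ C > 0, ∀ z ∈ Set.Icc Smin Smax, PL2ConstLE C fun x => f (x.1, x.2, z)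

/-- The limiting random variable `X_{κ,σ²}(Λ,B,H)` as a function of `((Λ,B),H)`. -/
def Xlim (κ ξ γ : ℝ) (q : (ℝ × ℝ) × ℝ) : ℝ :=
  (1 - (1 + ξ * q.1.1)⁻¹) * q.1.2 +
    Real.sqrt κ * (Real.sqrt γ * (Real.sqrt q.1.1)⁻¹ / (1 + (ξ * q.1.1)⁻¹)) * q.2


/-!
Write `D(u,τ) = (uτ + uσ²/τ - E[φ(u,τ)]) / 2` with `φ(u,τ) = (κu²Λ + B²)τ / (τ + uΛ)`; `φ` is
strictly convex in `u` and concave in `τ`. The map `ξ ↦ E[ξΛ/(1 + ξΛ)]` is continuous and strictly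
increasing, and passes through `1/κ`, which gives `ξ`. For `τ* = √γ` and `u* = ξτ*` both
first-order conditions `∂_u D = ∂_τ D = 0` reduce to
`τ*²(1 - κE[(ξΛ/(1 + ξΛ))²]) = σ² + E[B²Λ/(1 + ξΛ)²]`, the definition of `γ`. The tangent-line
inequalities for `φ` then make `u*` the strict maximiser of `D(·,τ*)` and `τ*` the strict minimiser
of `D(u*,·)` (strictness in `τ` coming from `σ²/τ`), and a chain of saddle inequalities forces
every saddle point to be `(u*, τ*)`.
-/

theorem integral_lt_integral_of_ae_lt {α : Type*} [MeasurableSpace α] {μ : Measure α} [NeZero μ]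
    {f g : α → ℝ} (hf : Integrable f μ) (hg : Integrable g μ) (h : ∀ᵐ x ∂μ, f x < g x) :
    ∫ x, f x ∂μ < ∫ x, g x ∂μ := by
  rw [← sub_pos, ← integral_sub hg hf]
  refine (integral_pos_iff_support_of_nonneg_ae (h.mono fun x hx => (sub_pos.2 hx).le)
    (hg.sub hf)).2 ?_
  have hfull : ∀ᵐ x ∂μ, x ∈ Function.support (g - f) := h.mono fun x hx => (sub_pos.2 hx).ne'
  exact pos_iff_ne_zero.2 fun h0 => NeZero.ne μ (by
    simpa using (measure_eq_zero_iff_ae_notMem.1 h0).and hfull |>.exists)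

theorem isSaddle_and_unique_of_strict {α β : Type*} {F : α → β → ℝ} {S : Set α} {T : Set β}
    {u₀ : α} {τ₀ : β} (hu₀ : u₀ ∈ S) (hτ₀ : τ₀ ∈ T)
    (hmax : ∀ u ∈ S, u ≠ u₀ → F u τ₀ < F u₀ τ₀) (hmin : ∀ τ ∈ T, τ ≠ τ₀ → F u₀ τ₀ < F u₀ τ) :
    (∀ u ∈ S, F u τ₀ ≤ F u₀ τ₀) ∧ (∀ τ ∈ T, F u₀ τ₀ ≤ F u₀ τ) ∧
      ∀ u τ, u ∈ S → τ ∈ T → (∀ u' ∈ S, F u' τ ≤ F u τ) → (∀ τ' ∈ T, F u τ ≤ F u τ') →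
        u = u₀ ∧ τ = τ₀ := by
  have hmax' : ∀ u ∈ S, F u τ₀ ≤ F u₀ τ₀ := fun u hu =>
    (eq_or_ne u u₀).elim (fun h => h ▸ le_rfl) fun h => (hmax u hu h).le
  have hmin' : ∀ τ ∈ T, F u₀ τ₀ ≤ F u₀ τ := fun τ hτ =>
    (eq_or_ne τ τ₀).elim (fun h => h ▸ le_rfl) fun h => (hmin τ hτ h).le
  refine ⟨hmax', hmin', fun u τ hu hτ hsadu hsadτ => ?_⟩
  have hu_eq : u = u₀ := by
    by_contra hne
    linarith [hsadτ τ₀ hτ₀, hmax u hu hne, hmin' τ hτ, hsadu u₀ hu₀]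
  subst hu_eq
  refine ⟨rfl, by_contra fun hne => ?_⟩
  linarith [hmin τ hτ hne, hsadτ τ₀ hτ₀]

section InvOneAddInv

variable {z : ℝ}

theorem inv_one_add_inv_eq_div (hz : z ≠ 0) : (1 + z⁻¹)⁻¹ = z / (1 + z) := by
  rw [show 1 + z⁻¹ = (1 + z) / z by field_simp; ring, inv_div]

theorem inv_one_add_inv_lt_one (hz : 0 < z) : (1 + z⁻¹)⁻¹ < 1 :=
  inv_lt_one_of_one_lt₀ (lt_add_of_pos_right 1 (inv_pos.2 hz))

theorem inv_one_add_inv_le_self (hz : 0 < z) : (1 + z⁻¹)⁻¹ ≤ z := by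
  simpa using inv_anti₀ (inv_pos.2 hz) (le_add_of_nonneg_left zero_le_one)

theorem strictMonoOn_inv_one_add_inv : StrictMonoOn (fun z : ℝ => (1 + z⁻¹)⁻¹) (Set.Ioi 0) :=
  fun a (ha : 0 < a) b (hb : 0 < b) hab => by
    dsimp only
    gcongr

end InvOneAddInv

def meanRatio (μ : Measure (ℝ × ℝ)) (ξ : ℝ) : ℝ := ∫ x, (1 + (ξ * x.1)⁻¹)⁻¹ ∂μ

def meanRatioSq (μ : Measure (ℝ × ℝ)) (ξ : ℝ) : ℝ := ∫ x, (((ξ * x.1)⁻¹ + 1)⁻¹) ^ 2 ∂μ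

def biasTerm (μ : Measure (ℝ × ℝ)) (ξ : ℝ) : ℝ := ∫ x, x.2 ^ 2 * x.1⁻¹ / (x.1⁻¹ + ξ) ^ 2 ∂μ

theorem mul_inv_div_inv_add_sq {a l ξ : ℝ} (hl : l ≠ 0) :
    a * l⁻¹ / (l⁻¹ + ξ) ^ 2 = a * l / (1 + ξ * l) ^ 2 := by
  rw [show l⁻¹ + ξ = (1 + ξ * l) / l by field_simp, div_pow, div_div_eq_mul_div]
  congr 1
  field_simp

theorem integrable_sq_snd_mul_inv_fst_div_sq {μ : Measure (ℝ × ℝ)} {ξ : ℝ}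
    (hpos : ∀ᵐ x ∂μ, 0 < x.1) (hBL : Integrable (fun x => x.2 ^ 2 * x.1) μ) (hξ : 0 ≤ ξ) :
    Integrable (fun x : ℝ × ℝ => x.2 ^ 2 * x.1⁻¹ / (x.1⁻¹ + ξ) ^ 2) μ :=
  hBL.mono' (Measurable.aestronglyMeasurable (by fun_prop)) <| hpos.mono fun x hx => by
    rw [Real.norm_eq_abs, mul_inv_div_inv_add_sq hx.ne', abs_of_nonneg (by positivity)]
    exact div_le_self (by positivity) (one_le_pow₀ (le_add_of_nonneg_right (by positivity)))

theorem biasTerm_nonneg {μ : Measure (ℝ × ℝ)} {ξ : ℝ} (hpos : ∀ᵐ x ∂μ, 0 < x.1) :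
    0 ≤ biasTerm μ ξ :=
  integral_nonneg_of_ae <| hpos.mono fun x hx => by positivity

section FixedPoint

variable {μ : Measure (ℝ × ℝ)} [IsProbabilityMeasure μ] {ξ Smin Smax : ℝ}

theorem integrable_inv_one_add_inv (hpos : ∀ᵐ x ∂μ, 0 < x.1) (hξ : 0 < ξ) :
    Integrable (fun x : ℝ × ℝ => (1 + (ξ * x.1)⁻¹)⁻¹) μ :=
  Integrable.of_bound (by fun_prop) 1 <| hpos.mono fun x hx => by
    have hz : 0 < ξ * x.1 := mul_pos hξ hx
    rw [Real.norm_eq_abs, abs_of_pos (by positivity)]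
    exact (inv_one_add_inv_lt_one hz).le

theorem integrable_inv_one_add_inv_sq (hpos : ∀ᵐ x ∂μ, 0 < x.1) (hξ : 0 < ξ) :
    Integrable (fun x : ℝ × ℝ => (((ξ * x.1)⁻¹ + 1)⁻¹) ^ 2) μ :=
  Integrable.of_bound (by fun_prop) 1 <| hpos.mono fun x hx => by
    have hz : 0 < ξ * x.1 := mul_pos hξ hx
    rw [Real.norm_eq_abs, abs_of_pos (by positivity), add_comm]
    exact pow_le_one₀ (by positivity) (inv_one_add_inv_lt_one hz).le

theorem strictMonoOn_meanRatio (hpos : ∀ᵐ x ∂μ, 0 < x.1) :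
    StrictMonoOn (meanRatio μ) (Set.Ioi 0) := fun _ ha _ hb hab =>
  integral_lt_integral_of_ae_lt (integrable_inv_one_add_inv hpos ha)
    (integrable_inv_one_add_inv hpos hb) <| hpos.mono fun _ hx =>
      strictMonoOn_inv_one_add_inv (mul_pos ha hx) (mul_pos hb hx) (mul_lt_mul_of_pos_right hab hx)

theorem continuousOn_meanRatio (hpos : ∀ᵐ x ∂μ, 0 < x.1) :
    ContinuousOn (meanRatio μ) (Set.Ioi 0) :=
  continuousOn_of_dominated (bound := fun _ => 1)
    (fun _ hξ => (integrable_inv_one_add_inv hpos hξ).aestronglyMeasurable)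
    (fun ξ (hξ : 0 < ξ) => hpos.mono fun x hx => by
      rw [Real.norm_eq_abs, abs_of_pos (by positivity)]
      exact (inv_one_add_inv_lt_one (mul_pos hξ hx)).le)
    (integrable_const 1)
    (hpos.mono fun x hx => by fun_prop (disch := intro ξ (hξ : 0 < ξ); positivity))

theorem meanRatio_le_mul (hpos : ∀ᵐ x ∂μ, 0 < x.1) (hmax : ∀ᵐ x ∂μ, x.1 ≤ Smax) (hξ : 0 < ξ) :
    meanRatio μ ξ ≤ ξ * Smax :=
  calc meanRatio μ ξ ≤ ∫ _, ξ * Smax ∂μ :=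
        integral_mono_ae (integrable_inv_one_add_inv hpos hξ) (integrable_const _)
          ((hpos.and hmax).mono fun x hx => (inv_one_add_inv_le_self (mul_pos hξ hx.1)).trans
            (mul_le_mul_of_nonneg_left hx.2 hξ.le))
    _ = ξ * Smax := by simp

theorem inv_one_add_inv_le_meanRatio (hSmin : 0 < Smin) (hmin : ∀ᵐ x ∂μ, Smin ≤ x.1)
    (hξ : 0 < ξ) : (1 + (ξ * Smin)⁻¹)⁻¹ ≤ meanRatio μ ξ := by
  have hpos : ∀ᵐ x ∂μ, 0 < x.1 := hmin.mono fun x hx => hSmin.trans_le hx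
  calc (1 + (ξ * Smin)⁻¹)⁻¹ = ∫ _, (1 + (ξ * Smin)⁻¹)⁻¹ ∂μ := by simp
    _ ≤ meanRatio μ ξ := integral_mono_ae (integrable_const _) (integrable_inv_one_add_inv hpos hξ)
      (hmin.mono fun x hx => strictMonoOn_inv_one_add_inv.monotoneOn (mul_pos hξ hSmin)
        (mul_pos hξ (hSmin.trans_le hx)) (mul_le_mul_of_nonneg_left hx hξ.le))

theorem existsUnique_meanRatio_eq_inv {κ : ℝ} (hSmin : 0 < Smin)
    (hμsupp : ∀ᵐ x ∂μ, x.1 ∈ Set.Icc Smin Smax) (hκ : 1 < κ) :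
    ∃! ξ, 0 < ξ ∧ meanRatio μ ξ = κ⁻¹ := by
  have hpos : ∀ᵐ x ∂μ, 0 < x.1 := hμsupp.mono fun x hx => hSmin.trans_le hx.1
  have hSmax : 0 < Smax := by
    obtain ⟨x, hx⟩ := hμsupp.exists
    exact hSmin.trans_le (hx.1.trans hx.2)
  have hκ0 : 0 < κ - 1 := by linarith
  -- bracket the root: `ξΛ ≤ 1/κ` at the left end and `ξΛ ≥ 1/(κ - 1)` at the right end
  have hlow : meanRatio μ (κ * Smax)⁻¹ ≤ κ⁻¹ :=
    calc meanRatio μ (κ * Smax)⁻¹ ≤ (κ * Smax)⁻¹ * Smax :=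
          meanRatio_le_mul hpos (hμsupp.mono fun x hx => hx.2) (by positivity)
      _ = κ⁻¹ := by field_simp
  have hhigh : κ⁻¹ ≤ meanRatio μ ((κ - 1) * Smin)⁻¹ :=
    calc κ⁻¹ = (1 + (((κ - 1) * Smin)⁻¹ * Smin)⁻¹)⁻¹ := by
          rw [show ((κ - 1) * Smin)⁻¹ * Smin = (κ - 1)⁻¹ by field_simp, inv_inv, add_sub_cancel]
      _ ≤ meanRatio μ ((κ - 1) * Smin)⁻¹ :=
          inv_one_add_inv_le_meanRatio hSmin (hμsupp.mono fun x hx => hx.1) (by positivity)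
  obtain ⟨ξ, hξ, hFξ⟩ := isPreconnected_Ioi.intermediate_value (a := (κ * Smax)⁻¹)
    (b := ((κ - 1) * Smin)⁻¹) (by simp only [Set.mem_Ioi]; positivity)
    (by simp only [Set.mem_Ioi]; positivity) (continuousOn_meanRatio hpos) ⟨hlow, hhigh⟩
  exact ⟨ξ, ⟨hξ, hFξ⟩, fun ξ' hξ' => (strictMonoOn_meanRatio hpos).injOn hξ'.1 hξ
    (hξ'.2.trans hFξ.symm)⟩

theorem meanRatioSq_lt_meanRatio (hpos : ∀ᵐ x ∂μ, 0 < x.1) (hξ : 0 < ξ) :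
    meanRatioSq μ ξ < meanRatio μ ξ :=
  integral_lt_integral_of_ae_lt (integrable_inv_one_add_inv_sq hpos hξ)
    (integrable_inv_one_add_inv hpos hξ) <| hpos.mono fun x hx => by
      have hz : 0 < ξ * x.1 := mul_pos hξ hx
      rw [add_comm]
      exact pow_lt_self_of_lt_one₀ (by positivity) (inv_one_add_inv_lt_one hz) one_lt_two

end FixedPoint

def saddleObjective (κ σ : ℝ) (μ : Measure (ℝ × ℝ)) (u τ : ℝ) : ℝ :=
  (1 / 2) * (u * τ + u * σ ^ 2 / τ - u ^ 2 * κ * ∫ x, (x.1⁻¹ + u / τ)⁻¹ ∂μ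
    - ∫ x, x.2 ^ 2 * x.1⁻¹ / (x.1⁻¹ + u / τ) ∂μ)

def saddleIntegrand (κ u τ l b : ℝ) : ℝ := (κ * u ^ 2 * l + b ^ 2) * τ / (τ + u * l)

section Integrand

variable {κ u v t τ l b : ℝ}

theorem saddleIntegrand_eq_add (hu : 0 ≤ u) (hτ : 0 < τ) (hl : 0 < l) :
    saddleIntegrand κ u τ l b = u ^ 2 * κ * (l⁻¹ + u / τ)⁻¹ + b ^ 2 * l⁻¹ / (l⁻¹ + u / τ) := by
  have : 0 < τ + u * l := by positivity
  rw [saddleIntegrand, show l⁻¹ + u / τ = (τ + u * l) / (l * τ) by field_simp]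
  field_simp

-- Strict convexity in `u`: the slope is `∂/∂u saddleIntegrand` at `v`.
theorem saddleIntegrand_add_mul_lt (hκ : 0 < κ) (ht : 0 < t) (hl : 0 < l) (hu : 0 ≤ u)
    (hv : 0 ≤ v) (huv : u ≠ v) :
    saddleIntegrand κ v t l b
        + (u - v) * (t * l * (κ * v * (2 * t + v * l) - b ^ 2) / (t + v * l) ^ 2)
      < saddleIntegrand κ u t l b := by
  have h₁ : 0 < t + u * l := by positivity
  have h₂ : 0 < t + v * l := by positivity
  have hgap : saddleIntegrand κ u t l b - (saddleIntegrand κ v t l b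
      + (u - v) * (t * l * (κ * v * (2 * t + v * l) - b ^ 2) / (t + v * l) ^ 2))
      = (u - v) ^ 2 * (t * l * (κ * t ^ 2 + l * b ^ 2) / ((t + u * l) * (t + v * l) ^ 2)) := by
    simp only [saddleIntegrand]
    field_simp
    ring
  have : 0 < (u - v) ^ 2 * (t * l * (κ * t ^ 2 + l * b ^ 2) / ((t + u * l) * (t + v * l) ^ 2)) :=
    mul_pos (sq_pos_of_ne_zero (sub_ne_zero.2 huv)) (by positivity)
  linarith

-- Concavity in `τ`: the slope is `∂/∂τ saddleIntegrand` at `t`.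
theorem saddleIntegrand_le_add_mul (hκ : 0 ≤ κ) (hu : 0 ≤ u) (ht : 0 < t) (hτ : 0 < τ)
    (hl : 0 < l) :
    saddleIntegrand κ u τ l b
      ≤ saddleIntegrand κ u t l b
        + (τ - t) * ((κ * u ^ 2 * l + b ^ 2) * u * l / (t + u * l) ^ 2) := by
  have h₁ : 0 < t + u * l := by positivity
  have h₂ : 0 < τ + u * l := by positivity
  have hgap : saddleIntegrand κ u t l b
      + (τ - t) * ((κ * u ^ 2 * l + b ^ 2) * u * l / (t + u * l) ^ 2) - saddleIntegrand κ u τ l b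
      = (κ * u ^ 2 * l + b ^ 2) * u * l * (τ - t) ^ 2 / ((t + u * l) ^ 2 * (τ + u * l)) := by
    simp only [saddleIntegrand]
    field_simp
    ring
  have : 0 ≤ (κ * u ^ 2 * l + b ^ 2) * u * l * (τ - t) ^ 2 / ((t + u * l) ^ 2 * (τ + u * l)) := by
    positivity
  linarith

variable {s : ℝ}

theorem deriv_fst_saddleIntegrand_eq (hs : 0 < s) (ht : 0 < t) (hl : 0 < l) :
    t * l * (κ * (s * t) * (2 * t + s * t * l) - b ^ 2) / (t + s * t * l) ^ 2
      = κ * t * (2 * (1 + (s * l)⁻¹)⁻¹ - ((s * l)⁻¹ + 1)⁻¹ ^ 2)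
        - b ^ 2 * l⁻¹ / (l⁻¹ + s) ^ 2 / t := by
  have : 0 < 1 + s * l := by positivity
  rw [mul_inv_div_inv_add_sq hl.ne', add_comm _ (1 : ℝ), inv_one_add_inv_eq_div (by positivity)]
  field_simp
  ring

theorem deriv_snd_saddleIntegrand_eq (hs : 0 < s) (ht : 0 < t) (hl : 0 < l) :
    (κ * (s * t) ^ 2 * l + b ^ 2) * (s * t) * l / (t + s * t * l) ^ 2
      = s * t * (κ * ((s * l)⁻¹ + 1)⁻¹ ^ 2 + b ^ 2 * l⁻¹ / (l⁻¹ + s) ^ 2 / t ^ 2) := by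
  have : 0 < 1 + s * l := by positivity
  rw [mul_inv_div_inv_add_sq hl.ne', add_comm _ (1 : ℝ), inv_one_add_inv_eq_div (by positivity)]
  field_simp

end Integrand

section Objective

variable {μ : Measure (ℝ × ℝ)} {κ σ s t Smin Smax : ℝ}

theorem integrable_inv_inv_fst_add [IsFiniteMeasure μ] (hpos : ∀ᵐ x ∂μ, 0 < x.1)
    (hmax : ∀ᵐ x ∂μ, x.1 ≤ Smax) {c : ℝ} (hc : 0 ≤ c) :
    Integrable (fun x : ℝ × ℝ => (x.1⁻¹ + c)⁻¹) μ :=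
  Integrable.of_bound (Measurable.aestronglyMeasurable (by fun_prop)) Smax <|
    (hpos.and hmax).mono fun x hx => by
      rw [Real.norm_eq_abs, abs_of_pos (by have := hx.1; positivity)]
      calc (x.1⁻¹ + c)⁻¹ ≤ (x.1⁻¹)⁻¹ := inv_anti₀ (inv_pos.2 hx.1) (le_add_of_nonneg_right hc)
        _ = x.1 := inv_inv _
        _ ≤ Smax := hx.2

theorem integrable_sq_snd_mul_inv_fst_div (hSmin : 0 < Smin) (hmin : ∀ᵐ x ∂μ, Smin ≤ x.1)
    (hBL : Integrable (fun x => x.2 ^ 2 * x.1) μ) {c : ℝ} (hc : 0 ≤ c) :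
    Integrable (fun x : ℝ × ℝ => x.2 ^ 2 * x.1⁻¹ / (x.1⁻¹ + c)) μ :=
  (hBL.const_mul Smin⁻¹).mono' (Measurable.aestronglyMeasurable (by fun_prop)) <|
    hmin.mono fun x hx => by
      have hl : 0 < x.1 := hSmin.trans_le hx
      rw [Real.norm_eq_abs, abs_of_nonneg (by positivity)]
      calc x.2 ^ 2 * x.1⁻¹ / (x.1⁻¹ + c) ≤ x.2 ^ 2 := by
            rw [div_le_iff₀ (by positivity)]
            exact mul_le_mul_of_nonneg_left (le_add_of_nonneg_right hc) (sq_nonneg _)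
        _ = Smin⁻¹ * (x.2 ^ 2 * Smin) := by field_simp
        _ ≤ Smin⁻¹ * (x.2 ^ 2 * x.1) := by gcongr

variable [IsProbabilityMeasure μ] {u τ : ℝ}

theorem integrable_saddleIntegrand (hSmin : 0 < Smin)
    (hμsupp : ∀ᵐ x ∂μ, x.1 ∈ Set.Icc Smin Smax) (hBL : Integrable (fun x => x.2 ^ 2 * x.1) μ)
    (hu : 0 ≤ u) (hτ : 0 < τ) :
    Integrable (fun x : ℝ × ℝ => saddleIntegrand κ u τ x.1 x.2) μ :=
  (((integrable_inv_inv_fst_add (hμsupp.mono fun _ hx => hSmin.trans_le hx.1)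
    (hμsupp.mono fun _ hx => hx.2) (div_nonneg hu hτ.le)).const_mul (u ^ 2 * κ)).add
    (integrable_sq_snd_mul_inv_fst_div hSmin (hμsupp.mono fun _ hx => hx.1) hBL
      (div_nonneg hu hτ.le))).congr <|
    hμsupp.mono fun _ hx => (saddleIntegrand_eq_add hu hτ (hSmin.trans_le hx.1)).symm

theorem saddleObjective_eq (hSmin : 0 < Smin)
    (hμsupp : ∀ᵐ x ∂μ, x.1 ∈ Set.Icc Smin Smax) (hBL : Integrable (fun x => x.2 ^ 2 * x.1) μ)
    (hu : 0 ≤ u) (hτ : 0 < τ) :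
    saddleObjective κ σ μ u τ
      = (u * τ + u * σ ^ 2 / τ - ∫ x, saddleIntegrand κ u τ x.1 x.2 ∂μ) / 2 := by
  rw [saddleObjective, integral_congr_ae (hμsupp.mono fun x hx =>
      saddleIntegrand_eq_add hu hτ (hSmin.trans_le hx.1)),
    integral_add ((integrable_inv_inv_fst_add (hμsupp.mono fun _ hx => hSmin.trans_le hx.1)
      (hμsupp.mono fun _ hx => hx.2) (div_nonneg hu hτ.le)).const_mul _)
      (integrable_sq_snd_mul_inv_fst_div hSmin (hμsupp.mono fun _ hx => hx.1) hBL
        (div_nonneg hu hτ.le)),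
    integral_const_mul]
  ring

theorem saddleObjective_lt_of_ne_fst (hSmin : 0 < Smin)
    (hμsupp : ∀ᵐ x ∂μ, x.1 ∈ Set.Icc Smin Smax) (hBL : Integrable (fun x => x.2 ^ 2 * x.1) μ)
    (hκ : 0 < κ) (hs : 0 < s) (ht : 0 < t) (hFs : meanRatio μ s = κ⁻¹)
    (hγ : t ^ 2 * (1 - κ * meanRatioSq μ s) = σ ^ 2 + biasTerm μ s)
    (hu : 0 ≤ u) (hne : u ≠ s * t) :
    saddleObjective κ σ μ u t < saddleObjective κ σ μ (s * t) t := by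
  have hpos : ∀ᵐ x ∂μ, 0 < x.1 := hμsupp.mono fun x hx => hSmin.trans_le hx.1
  have hst : 0 ≤ s * t := (mul_pos hs ht).le
  have hA : Integrable (fun x : ℝ × ℝ => 2 * (1 + (s * x.1)⁻¹)⁻¹) μ :=
    (integrable_inv_one_add_inv hpos hs).const_mul 2
  have hQ := integrable_inv_one_add_inv_sq hpos hs
  have hAQ : Integrable (fun x : ℝ × ℝ =>
      κ * t * (2 * (1 + (s * x.1)⁻¹)⁻¹ - ((s * x.1)⁻¹ + 1)⁻¹ ^ 2)) μ :=
    (hA.sub hQ).const_mul _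
  have hW := (integrable_sq_snd_mul_inv_fst_div_sq hpos hBL hs.le).div_const t
  have hd : Integrable (fun x : ℝ × ℝ => κ * t * (2 * (1 + (s * x.1)⁻¹)⁻¹ - ((s * x.1)⁻¹ + 1)⁻¹ ^ 2)
      - x.2 ^ 2 * x.1⁻¹ / (x.1⁻¹ + s) ^ 2 / t) μ := hAQ.sub hW
  have hderiv : ∫ x, (κ * t * (2 * (1 + (s * x.1)⁻¹)⁻¹ - ((s * x.1)⁻¹ + 1)⁻¹ ^ 2)
      - x.2 ^ 2 * x.1⁻¹ / (x.1⁻¹ + s) ^ 2 / t) ∂μ = t + σ ^ 2 / t := by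
    rw [integral_sub hAQ hW, integral_const_mul, integral_sub hA hQ, integral_const_mul,
      integral_div]
    change κ * t * (2 * meanRatio μ s - meanRatioSq μ s) - biasTerm μ s / t = _
    rw [hFs]
    field_simp
    linear_combination hγ
  have hφ := integrable_saddleIntegrand (κ := κ) hSmin hμsupp hBL hst ht
  have hlt := integral_lt_integral_of_ae_lt (hφ.add (hd.const_mul (u - s * t)))
    (integrable_saddleIntegrand hSmin hμsupp hBL hu ht) <| hpos.mono fun x hx => by
      rw [Pi.add_apply, ← deriv_fst_saddleIntegrand_eq hs ht hx]
      exact saddleIntegrand_add_mul_lt hκ ht hx hu hst hne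
  rw [integral_add' hφ (hd.const_mul _), integral_const_mul, hderiv] at hlt
  rw [saddleObjective_eq hSmin hμsupp hBL hu ht, saddleObjective_eq hSmin hμsupp hBL hst ht]
  have : (u - s * t) * (t + σ ^ 2 / t) = u * t + u * σ ^ 2 / t - s * t * t - s * t * σ ^ 2 / t := by
    ring
  linarith

theorem saddleObjective_lt_of_ne_snd (hSmin : 0 < Smin)
    (hμsupp : ∀ᵐ x ∂μ, x.1 ∈ Set.Icc Smin Smax) (hBL : Integrable (fun x => x.2 ^ 2 * x.1) μ)
    (hκ : 0 < κ) (hσ : σ ≠ 0) (hs : 0 < s) (ht : 0 < t)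
    (hγ : t ^ 2 * (1 - κ * meanRatioSq μ s) = σ ^ 2 + biasTerm μ s)
    (hτ : 0 < τ) (hne : τ ≠ t) :
    saddleObjective κ σ μ (s * t) t < saddleObjective κ σ μ (s * t) τ := by
  have hpos : ∀ᵐ x ∂μ, 0 < x.1 := hμsupp.mono fun x hx => hSmin.trans_le hx.1
  have hst : 0 < s * t := mul_pos hs ht
  have hQ : Integrable (fun x : ℝ × ℝ => κ * ((s * x.1)⁻¹ + 1)⁻¹ ^ 2) μ :=
    (integrable_inv_one_add_inv_sq hpos hs).const_mul κ
  have hW := (integrable_sq_snd_mul_inv_fst_div_sq hpos hBL hs.le).div_const (t ^ 2)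
  have hd : Integrable (fun x : ℝ × ℝ => s * t * (κ * ((s * x.1)⁻¹ + 1)⁻¹ ^ 2
      + x.2 ^ 2 * x.1⁻¹ / (x.1⁻¹ + s) ^ 2 / t ^ 2)) μ := (hQ.add hW).const_mul _
  have hderiv : ∫ x, s * t * (κ * ((s * x.1)⁻¹ + 1)⁻¹ ^ 2
      + x.2 ^ 2 * x.1⁻¹ / (x.1⁻¹ + s) ^ 2 / t ^ 2) ∂μ = s * t * (1 - σ ^ 2 / t ^ 2) := by
    rw [integral_const_mul, integral_add hQ hW, integral_const_mul, integral_div]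
    change s * t * (κ * meanRatioSq μ s + biasTerm μ s / t ^ 2) = _
    field_simp
    linear_combination -hγ
  have hφ := integrable_saddleIntegrand (κ := κ) hSmin hμsupp hBL hst.le ht
  have hle := integral_mono_ae (integrable_saddleIntegrand hSmin hμsupp hBL hst.le hτ)
    (hφ.add (hd.const_mul (τ - t))) <| hpos.mono fun x hx => by
      rw [Pi.add_apply, ← deriv_snd_saddleIntegrand_eq hs ht hx]
      exact saddleIntegrand_le_add_mul hκ.le hst.le ht hτ hx
  rw [integral_add' hφ (hd.const_mul _), integral_const_mul, hderiv] at hle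
  rw [saddleObjective_eq hSmin hμsupp hBL hst.le ht, saddleObjective_eq hSmin hμsupp hBL hst.le hτ]
  -- the gain comes from the strict convexity of `τ ↦ σ² / τ`
  have hgap : s * t * τ + s * t * σ ^ 2 / τ - (s * t * t + s * t * σ ^ 2 / t)
      - (τ - t) * (s * t * (1 - σ ^ 2 / t ^ 2)) = s * t * σ ^ 2 * (τ - t) ^ 2 / (τ * t ^ 2) := by
    field_simp
    ring
  have : 0 < s * t * σ ^ 2 * (τ - t) ^ 2 / (τ * t ^ 2) := by
    have := sq_pos_of_ne_zero (sub_ne_zero.2 hne)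
    positivity
  linarith

end Objective

theorem unique_saddle_point_of_D_general
    (κ σ Smin Smax : ℝ) (hκ : 1 < κ) (hσ : 0 < σ)
    (hSmin : 0 < Smin)
    (μ : Measure (ℝ × ℝ)) [IsProbabilityMeasure μ]
    -- Λ supported in [Σmin, Σmax] ⊂ (0,∞), and E[B²Λ] < ∞
    (hμsupp : ∀ᵐ x ∂μ, x.1 ∈ Set.Icc Smin Smax)
    (hBL : Integrable (fun x => x.2 ^ 2 * x.1) μ)
    -- the concave-convex objective D(u,τ)
    (D : ℝ → ℝ → ℝ)
    (hD : ∀ u τ, D u τ = (1 / 2) * (u * τ + u * σ ^ 2 / τ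
      - u ^ 2 * κ * ∫ x, (x.1⁻¹ + u / τ)⁻¹ ∂μ
      - ∫ x, x.2 ^ 2 * x.1⁻¹ / (x.1⁻¹ + u / τ) ∂μ)) :
    -- there exists a unique saddle point (u*, τ*), and it satisfies
    -- u*/τ* = ξ (the unique positive solution of the fixed-point equation)
    -- and τ*² = γ
    ∃ ustar τstar : ℝ, 0 ≤ ustar ∧ 0 < τstar ∧
      (∀ u : ℝ, 0 ≤ u → D u τstar ≤ D ustar τstar) ∧
      (∀ τ : ℝ, 0 < τ → D ustar τstar ≤ D ustar τ) ∧
      (∀ u τ : ℝ, 0 ≤ u → 0 < τ →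
        (∀ u' : ℝ, 0 ≤ u' → D u' τ ≤ D u τ) →
        (∀ τ' : ℝ, 0 < τ' → D u τ ≤ D u τ') → u = ustar ∧ τ = τstar) ∧
      (0 < ustar / τstar ∧
        ∫ x, (1 + (ustar / τstar * x.1)⁻¹)⁻¹ ∂μ = κ⁻¹ ∧
        (∀ ξ' : ℝ, 0 < ξ' → (∫ x, (1 + (ξ' * x.1)⁻¹)⁻¹ ∂μ = κ⁻¹) → ξ' = ustar / τstar) ∧
        τstar ^ 2 = (σ ^ 2 + ∫ x, x.2 ^ 2 * x.1⁻¹ / (x.1⁻¹ + ustar / τstar) ^ 2 ∂μ) /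
          (1 - κ * ∫ x, (((ustar / τstar * x.1)⁻¹ + 1)⁻¹) ^ 2 ∂μ)) := by
  obtain rfl : D = saddleObjective κ σ μ := funext₂ hD
  have hκ0 : 0 < κ := by linarith
  have hpos : ∀ᵐ x ∂μ, 0 < x.1 := hμsupp.mono fun _ hx => hSmin.trans_le hx.1
  obtain ⟨ξ, ⟨hξ, hFξ⟩, hξ_unique⟩ := existsUnique_meanRatio_eq_inv hSmin hμsupp hκ
  have hQ : 0 < 1 - κ * meanRatioSq μ ξ := by
    have := mul_lt_mul_of_pos_left (hFξ ▸ meanRatioSq_lt_meanRatio hpos hξ) hκ0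
    rw [mul_inv_cancel₀ hκ0.ne'] at this
    linarith
  set γ := (σ ^ 2 + biasTerm μ ξ) / (1 - κ * meanRatioSq μ ξ)
  have hγ : 0 < γ := div_pos (by have := biasTerm_nonneg (ξ := ξ) hpos; positivity) hQ
  set t := √γ
  have ht : 0 < t := Real.sqrt_pos.2 hγ
  have ht2 : t ^ 2 = γ := Real.sq_sqrt hγ.le
  have hfoc : t ^ 2 * (1 - κ * meanRatioSq μ ξ) = σ ^ 2 + biasTerm μ ξ := by
    rw [ht2, div_mul_cancel₀ _ hQ.ne']
  obtain ⟨hmax, hmin, hunique⟩ := isSaddle_and_unique_of_strict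
    (F := saddleObjective κ σ μ) (S := Set.Ici 0) (T := Set.Ioi 0) (mul_pos hξ ht).le ht
    (fun _ hu hne => saddleObjective_lt_of_ne_fst hSmin hμsupp hBL hκ0 hξ ht hFξ hfoc hu hne)
    (fun _ hτ hne => saddleObjective_lt_of_ne_snd hSmin hμsupp hBL hκ0 hσ.ne' hξ ht hfoc hτ hne)
  refine ⟨ξ * t, t, (mul_pos hξ ht).le, ht, hmax, hmin, hunique, ?_⟩
  rw [mul_div_cancel_right₀ ξ ht.ne']
  exact ⟨hξ, hFξ, fun ξ' hξ' hFξ' => hξ_unique ξ' ⟨hξ', hFξ'⟩, ht2⟩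

theorem unique_saddle_point_of_D
    (κ σ Smin Smax : ℝ) (hκ : 1 < κ) (hσ : 0 < σ)
    (hSmin : 0 < Smin) (hSminmax : Smin ≤ Smax)
    (μ : Measure (ℝ × ℝ)) [IsProbabilityMeasure μ]
    -- Λ supported in [Σmin, Σmax] ⊂ (0,∞), and E[B²Λ] < ∞
    (hμsupp : ∀ᵐ x ∂μ, x.1 ∈ Set.Icc Smin Smax)
    (hBL : Integrable (fun x => x.2 ^ 2 * x.1) μ)
    -- the concave-convex objective D(u,τ)
    (D : ℝ → ℝ → ℝ)
    (hD : ∀ u τ, D u τ = (1 / 2) * (u * τ + u * σ ^ 2 / τ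
      - u ^ 2 * κ * ∫ x, (x.1⁻¹ + u / τ)⁻¹ ∂μ
      - ∫ x, x.2 ^ 2 * x.1⁻¹ / (x.1⁻¹ + u / τ) ∂μ)) :
    -- there exists a unique saddle point (u*, τ*), and it satisfies
    -- u*/τ* = ξ (the unique positive solution of the fixed-point equation)
    -- and τ*² = γ
    ∃ ustar τstar : ℝ, 0 ≤ ustar ∧ 0 < τstar ∧
      (∀ u : ℝ, 0 ≤ u → D u τstar ≤ D ustar τstar) ∧
      (∀ τ : ℝ, 0 < τ → D ustar τstar ≤ D ustar τ) ∧
      (∀ u τ : ℝ, 0 ≤ u → 0 < τ →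
        (∀ u' : ℝ, 0 ≤ u' → D u' τ ≤ D u τ) →
        (∀ τ' : ℝ, 0 < τ' → D u τ ≤ D u τ') → u = ustar ∧ τ = τstar) ∧
      (0 < ustar / τstar ∧
        ∫ x, (1 + (ustar / τstar * x.1)⁻¹)⁻¹ ∂μ = κ⁻¹ ∧
        (∀ ξ' : ℝ, 0 < ξ' → (∫ x, (1 + (ξ' * x.1)⁻¹)⁻¹ ∂μ = κ⁻¹) → ξ' = ustar / τstar) ∧
        τstar ^ 2 = (σ ^ 2 + ∫ x, x.2 ^ 2 * x.1⁻¹ / (x.1⁻¹ + ustar / τstar) ^ 2 ∂μ) /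
          (1 - κ * ∫ x, (((ustar / τstar * x.1)⁻¹ + 1)⁻¹) ^ 2 ∂μ)) :=
  unique_saddle_point_of_D_general κ σ Smin Smax hκ hσ hSmin μ hμsupp hBL D hD
end
end

section
/- Let g : ℝ → ℝ be Lipschitz and define f : ℝ³ → ℝ by f(x₁,x₂,x₃) = x₃(x₂ − g(x₁))². Then f is pseudo-Lipschitz of order 3. Moreover, if the third argument is restricted to a bounded set Z ⊂ ℝ, then f : ℝ²×Z → ℝ belongs to the class F, i.e., f ∈ PL(3) and the PL(2) constants of f(·,·,z) are uniformly bounded over z ∈ Z. In particular, taking Z = [Σ_min,Σ_max], every function of the form f(x,y,z) = z(y − g(x))² with g Lipschitz (the class F_L) belongs to F. -/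
open MeasureTheory ProbabilityTheory Filter Finset Matrix

noncomputable section

/-!
Write `r(v) = v₂ - g(v₁)`. Lipschitz continuity of `g` gives the linear growth bound
`|r(v)| ≤ (1 + K + |g 0|)(1 + ‖v‖)` and the Lipschitz bound `|r(v) - r(w)| ≤ (1 + K)‖v - w‖`.
For a fixed `z`, `z r(v)² - z r(w)² = z (r(v) + r(w)) (r(v) - r(w))` is then bounded by
`|z|` times a linear factor times `‖v - w‖`, which is the `PL(2)` bound, uniform for bounded `z`.
When `z` varies too, the extra term `(z - z') r(w)²` is quadratic in `‖w‖`, giving `PL(3)`.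
-/

lemma abs_fst_le_en2 (v : ℝ × ℝ) : |v.1| ≤ en2 v :=
  Real.abs_le_sqrt (by nlinarith [sq_nonneg v.2])

lemma abs_snd_le_en2 (v : ℝ × ℝ) : |v.2| ≤ en2 v :=
  Real.abs_le_sqrt (by nlinarith [sq_nonneg v.1])

lemma abs_fst_le_en3 (v : ℝ × ℝ × ℝ) : |v.1| ≤ en3 v :=
  Real.abs_le_sqrt (by nlinarith [sq_nonneg v.2.1, sq_nonneg v.2.2])

lemma abs_snd_fst_le_en3 (v : ℝ × ℝ × ℝ) : |v.2.1| ≤ en3 v :=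
  Real.abs_le_sqrt (by nlinarith [sq_nonneg v.1, sq_nonneg v.2.2])

lemma abs_snd_snd_le_en3 (v : ℝ × ℝ × ℝ) : |v.2.2| ≤ en3 v :=
  Real.abs_le_sqrt (by nlinarith [sq_nonneg v.1, sq_nonneg v.2.1])

lemma abs_sq_sub_sq_le {p q a b d M K : ℝ} (hp : |p| ≤ M * (1 + a)) (hq : |q| ≤ M * (1 + b))
    (hpq : |p - q| ≤ K * d) :
    |p ^ 2 - q ^ 2| ≤ M * (2 + a + b) * (K * d) := by
  have hsum : |p + q| ≤ M * (2 + a + b) := by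
    linarith [abs_add_le p q]
  calc |p ^ 2 - q ^ 2| = |p + q| * |p - q| := by rw [← abs_mul]; ring_nf
    _ ≤ M * (2 + a + b) * (K * d) :=
      mul_le_mul hsum hpq (abs_nonneg _) ((abs_nonneg _).trans hsum)

namespace LipschitzWith

variable {g : ℝ → ℝ} {K : NNReal}

lemma abs_sub_le_mul_one_add (hg : LipschitzWith K g) {u₁ u₂ n : ℝ} (h₁ : |u₁| ≤ n)
    (h₂ : |u₂| ≤ n) : |u₂ - g u₁| ≤ (1 + K + |g 0|) * (1 + n) := by
  have hg₁ : |g u₁ - g 0| ≤ K * |u₁| := by simpa [Real.dist_eq] using hg.dist_le_mul u₁ 0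
  have hn : 0 ≤ n := (abs_nonneg u₁).trans h₁
  have hK : (0 : ℝ) ≤ K := K.2
  calc |u₂ - g u₁| = |u₂ - (g u₁ - g 0) - g 0| := by ring_nf
    _ ≤ |u₂| + |g u₁ - g 0| + |g 0| := by
      linarith [abs_sub (u₂ - (g u₁ - g 0)) (g 0), abs_sub u₂ (g u₁ - g 0)]
    _ ≤ (1 + K + |g 0|) * (1 + n) := by
      nlinarith [mul_le_mul_of_nonneg_left h₁ hK, abs_nonneg (g 0)]

lemma abs_sub_sub_sub_le (hg : LipschitzWith K g) {x₁ x₂ y₁ y₂ d : ℝ} (h₁ : |x₁ - y₁| ≤ d)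
    (h₂ : |x₂ - y₂| ≤ d) : |(x₂ - g x₁) - (y₂ - g y₁)| ≤ (1 + K) * d := by
  have hg₁ : |g x₁ - g y₁| ≤ K * |x₁ - y₁| := by simpa [Real.dist_eq] using hg.dist_le_mul x₁ y₁
  calc |(x₂ - g x₁) - (y₂ - g y₁)| = |(x₂ - y₂) - (g x₁ - g y₁)| := by ring_nf
    _ ≤ |x₂ - y₂| + |g x₁ - g y₁| := abs_sub _ _
    _ ≤ (1 + K) * d := by nlinarith [mul_le_mul_of_nonneg_left h₁ K.2]

lemma pl2ConstLE_mul_sq_sub (hg : LipschitzWith K g) {z R : ℝ} (hz : |z| ≤ R) :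
    PL2ConstLE (2 * R * (1 + K + |g 0|) * (1 + K)) fun x : ℝ × ℝ => z * (x.2 - g x.1) ^ 2 := by
  intro x y
  set M : ℝ := 1 + K + |g 0|
  have hM : 0 ≤ M := by positivity
  have hR : 0 ≤ R := (abs_nonneg z).trans hz
  have hP : 0 ≤ R * M * (1 + K) * en2 (x.1 - y.1, x.2 - y.2) := by
    have : 0 ≤ en2 (x.1 - y.1, x.2 - y.2) := Real.sqrt_nonneg _
    positivity
  have hxy : 0 ≤ en2 x + en2 y := add_nonneg (Real.sqrt_nonneg _) (Real.sqrt_nonneg _)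
  have hsq : |(x.2 - g x.1) ^ 2 - (y.2 - g y.1) ^ 2| ≤
      M * (2 + en2 x + en2 y) * ((1 + K) * en2 (x.1 - y.1, x.2 - y.2)) :=
    abs_sq_sub_sq_le (hg.abs_sub_le_mul_one_add (abs_fst_le_en2 x) (abs_snd_le_en2 x))
      (hg.abs_sub_le_mul_one_add (abs_fst_le_en2 y) (abs_snd_le_en2 y))
      (hg.abs_sub_sub_sub_le (abs_fst_le_en2 (x.1 - y.1, x.2 - y.2))
        (abs_snd_le_en2 (x.1 - y.1, x.2 - y.2)))
  calc |z * (x.2 - g x.1) ^ 2 - z * (y.2 - g y.1) ^ 2|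
      = |z| * |(x.2 - g x.1) ^ 2 - (y.2 - g y.1) ^ 2| := by rw [← mul_sub, abs_mul]
    _ ≤ R * (M * (2 + en2 x + en2 y) * ((1 + K) * en2 (x.1 - y.1, x.2 - y.2))) :=
      mul_le_mul hz hsq (abs_nonneg _) hR
    _ ≤ 2 * R * M * (1 + K) * (1 + en2 x + en2 y) * en2 (x.1 - y.1, x.2 - y.2) := by
      nlinarith [mul_nonneg hP hxy]

lemma pl3_mul_sq_sub (hg : LipschitzWith K g) :
    PL3 3 fun v : ℝ × ℝ × ℝ => v.2.2 * (v.2.1 - g v.1) ^ 2 := by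
  set M : ℝ := 1 + K + |g 0|
  refine ⟨3 * M * (1 + K) + 2 * M ^ 2, by positivity, fun x y => ?_⟩
  set A := en3 x
  set B := en3 y
  set D := en3 (x.1 - y.1, x.2.1 - y.2.1, x.2.2 - y.2.2)
  have hA : 0 ≤ A := Real.sqrt_nonneg _
  have hD : 0 ≤ D := Real.sqrt_nonneg _
  have hy := hg.abs_sub_le_mul_one_add (abs_fst_le_en3 y) (abs_snd_fst_le_en3 y)
  have hsq : |(x.2.1 - g x.1) ^ 2 - (y.2.1 - g y.1) ^ 2| ≤ M * (2 + A + B) * ((1 + K) * D) :=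
    abs_sq_sub_sq_le (hg.abs_sub_le_mul_one_add (abs_fst_le_en3 x) (abs_snd_fst_le_en3 x)) hy
      (hg.abs_sub_sub_sub_le (abs_fst_le_en3 (x.1 - y.1, x.2.1 - y.2.1, x.2.2 - y.2.2))
        (abs_snd_fst_le_en3 (x.1 - y.1, x.2.1 - y.2.1, x.2.2 - y.2.2)))
  have hsq_y : (y.2.1 - g y.1) ^ 2 ≤ (M * (1 + B)) ^ 2 := by
    rw [← sq_abs]; exact pow_le_pow_left₀ (abs_nonneg _) hy 2
  have hMK : 0 ≤ M * (1 + K) * D := by positivity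
  have hA_sq : A * (2 + A + B) ≤ 3 * (1 + A ^ 2 + B ^ 2) := by
    nlinarith [sq_nonneg (1 - A), sq_nonneg (A - B)]
  have hB_sq : (1 + B) ^ 2 ≤ 2 * (1 + A ^ 2 + B ^ 2) := by
    nlinarith [sq_nonneg (1 - B), sq_nonneg A]
  calc |x.2.2 * (x.2.1 - g x.1) ^ 2 - y.2.2 * (y.2.1 - g y.1) ^ 2|
      = |x.2.2 * ((x.2.1 - g x.1) ^ 2 - (y.2.1 - g y.1) ^ 2)
          + (x.2.2 - y.2.2) * (y.2.1 - g y.1) ^ 2| := by ring_nf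
    _ ≤ |x.2.2| * |(x.2.1 - g x.1) ^ 2 - (y.2.1 - g y.1) ^ 2|
          + |x.2.2 - y.2.2| * (y.2.1 - g y.1) ^ 2 := by
      refine (abs_add_le _ _).trans_eq ?_
      rw [abs_mul, abs_mul, abs_of_nonneg (sq_nonneg (y.2.1 - g y.1))]
    _ ≤ A * (M * (2 + A + B) * ((1 + K) * D)) + D * (M * (1 + B)) ^ 2 :=
      add_le_add (mul_le_mul (abs_snd_snd_le_en3 x) hsq (abs_nonneg _) hA)
        (mul_le_mul (abs_snd_snd_le_en3 (x.1 - y.1, x.2.1 - y.2.1, x.2.2 - y.2.2)) hsq_y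
          (sq_nonneg _) hD)
    _ = A * (2 + A + B) * (M * (1 + K) * D) + (1 + B) ^ 2 * (M ^ 2 * D) := by ring
    _ ≤ 3 * (1 + A ^ 2 + B ^ 2) * (M * (1 + K) * D)
          + 2 * (1 + A ^ 2 + B ^ 2) * (M ^ 2 * D) :=
      add_le_add (mul_le_mul_of_nonneg_right hA_sq hMK)
        (mul_le_mul_of_nonneg_right hB_sq (by positivity))
    _ = (3 * M * (1 + K) + 2 * M ^ 2) * (1 + A ^ 2 + B ^ 2) * D := by ring

end LipschitzWith

theorem quadratic_of_lipschitz_is_PL3_and_in_F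
    (g : ℝ → ℝ) (hg : ∃ L : NNReal, LipschitzWith L g) :
    -- f(x₁,x₂,x₃) = x₃(x₂ − g(x₁))²
    PL3 3 (fun v : ℝ × ℝ × ℝ => v.2.2 * (v.2.1 - g v.1) ^ 2) ∧
    -- restricted to a bounded third coordinate, f belongs to the class F
    (∀ Z : Set ℝ, Bornology.IsBounded Z →
      ∃ C > 0, ∀ z ∈ Z,
        PL2ConstLE C fun x : ℝ × ℝ => z * (x.2 - g x.1) ^ 2) ∧
    -- in particular, with Z = [Σmin, Σmax], every member of F_L belongs to F
    (∀ Smin Smax : ℝ,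
      MemClassF Smin Smax fun v : ℝ × ℝ × ℝ => v.2.2 * (v.2.1 - g v.1) ^ 2) := by
  obtain ⟨K, hK⟩ := hg
  have hPL3 := hK.pl3_mul_sq_sub
  have hslices : ∀ Z : Set ℝ, Bornology.IsBounded Z →
      ∃ C > 0, ∀ z ∈ Z, PL2ConstLE C fun x : ℝ × ℝ => z * (x.2 - g x.1) ^ 2 := by
    intro Z hZ
    obtain ⟨R, hR, hRZ⟩ := hZ.exists_pos_norm_le
    exact ⟨_, by positivity, fun z hz => hK.pl2ConstLE_mul_sq_sub (hRZ z hz)⟩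
  exact ⟨hPL3, hslices, fun Smin Smax => ⟨hPL3, hslices _ (Metric.isBounded_Icc Smin Smax)⟩⟩
end
end
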